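/- arXiv:2509.22053 — 2 statements merged into one kernel-verified Lean document; each statement's English description precedes it below -/
import Mathlib

section
/- Under the setting of the combined objective: suppose L₁, L₂ : H → ℝ satisfy a ≤ L₂(φ) ≤ A and b ≤ L₁(φ) ≤ B for all φ ∈ H, with 0 < a ≤ A, 0 < b ≤ B, and L₁(φ₁) = min L₁ = b. If φ* minimizes L₁ + λL₂, then L₁(φ*)/L₂(φ*) ≤ λ(A/a − 1) + b/a. In particular, L₂(φ*)/L₁(φ*) ≥ 1/(C₀λ + C₁) with C₀ = A/a − 1 and C₁ = b/a. -/
theorem ratio_lower_bound {H : Type*} (L₁ L₂ : H → ℝ) (φ₁ φs : H) (lam a A b B : ℝ)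
    (hlam : 0 < lam)
    (ha : 0 < a) (haA : a ≤ A) (hb : 0 < b) (hbB : b ≤ B)
    (hL₂bdd : ∀ φ, a ≤ L₂ φ ∧ L₂ φ ≤ A)
    (hL₁bdd : ∀ φ, b ≤ L₁ φ ∧ L₁ φ ≤ B)
    (hmin₁ : ∀ φ, L₁ φ₁ ≤ L₁ φ) (hφ₁ : L₁ φ₁ = b)
    (hs : ∀ φ, L₁ φs + lam * L₂ φs ≤ L₁ φ + lam * L₂ φ) :
    L₁ φs / L₂ φs ≤ lam * (A / a - 1) + b / a ∧
    1 / ((A / a - 1) * lam + b / a) ≤ L₂ φs / L₁ φs := by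
  have h2s := hL₂bdd φs
  have h1s := hL₁bdd φs
  have h2s1 := hL₂bdd φ₁
  have hL2pos : 0 < L₂ φs := lt_of_lt_of_le ha h2s.1
  have hL1pos : 0 < L₁ φs := lt_of_lt_of_le hb h1s.1
  -- key inequality
  have hkey : L₁ φs ≤ b + lam * (A - L₂ φs) := by
    have := hs φ₁
    rw [hφ₁] at this
    nlinarith [h2s1.2, hlam.le]
  have hmain : L₁ φs / L₂ φs ≤ lam * (A / a - 1) + b / a := by
    rw [div_le_iff₀ hL2pos]
    have hAa : A / a - 1 ≥ 0 := by
      have : (1:ℝ) ≤ A / a := (one_le_div ha).mpr haA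
      linarith
    have hexp : (lam * (A / a - 1) + b / a) * L₂ φs
        = (lam * (A - a) + b) * (L₂ φs / a) := by
      field_simp
    rw [hexp]
    have h1 : (1:ℝ) ≤ L₂ φs / a := (one_le_div ha).mpr h2s.1
    have hpos : 0 ≤ lam * (A - a) + b := by nlinarith
    nlinarith [mul_le_mul_of_nonneg_left h1 hpos]
  refine ⟨hmain, ?_⟩
  have hRpos : 0 < (A / a - 1) * lam + b / a := by
    have : (1:ℝ) ≤ A / a := (one_le_div ha).mpr haA
    have : 0 < b / a := div_pos hb ha
    nlinarith
  have hmain' : L₁ φs / L₂ φs ≤ (A / a - 1) * lam + b / a := by linarith [hmain]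
  calc 1 / ((A / a - 1) * lam + b / a) ≤ 1 / (L₁ φs / L₂ φs) := by
        apply one_div_le_one_div_of_le (div_pos hL1pos hL2pos) hmain'
    _ = L₂ φs / L₁ φs := by rw [one_div_div]
end

section
/- Under the setting of the combined objective: suppose L₁, L₂ : H → ℝ satisfy 0 < b ≤ L₁(φ) ≤ B and 0 < a ≤ L₂(φ) for all φ, with L₂(φ₂) = min L₂ = a. If φ* minimizes L₁ + λL₂ with λ > 0, then L₂(φ*)/L₁(φ*) ≤ (1/λ)(B/b − 1) + a/b. That is, L_intra/L_inter ≤ C₂/λ + C₃ with C₂ = B/b − 1 and C₃ = a/b positive constants. -/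
theorem ratio_upper_bound {H : Type*} (L₁ L₂ : H → ℝ) (φ₂ φs : H) (lam a b B : ℝ)
    (hlam : 0 < lam)
    (hb : 0 < b) (hbB : b ≤ B) (ha : 0 < a)
    (hL₁bdd : ∀ φ, b ≤ L₁ φ ∧ L₁ φ ≤ B)
    (hL₂bdd : ∀ φ, a ≤ L₂ φ)
    (hmin₂ : ∀ φ, L₂ φ₂ ≤ L₂ φ) (hφ₂ : L₂ φ₂ = a)
    (hs : ∀ φ, L₁ φs + lam * L₂ φs ≤ L₁ φ + lam * L₂ φ) :
    L₂ φs / L₁ φs ≤ (1 / lam) * (B / b - 1) + a / b := by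
  have h1 := hs φ₂
  obtain ⟨hbs, hsB⟩ := hL₁bdd φs
  obtain ⟨_, h2B⟩ := hL₁bdd φ₂
  have key : L₂ φs ≤ (B - b) / lam + a := by
    rw [hφ₂] at h1
    rw [div_add' _ _ _ (ne_of_gt hlam), le_div_iff₀ hlam]
    nlinarith
  have h0 : 0 < L₁ φs := lt_of_lt_of_le hb hbs
  calc L₂ φs / L₁ φs ≤ L₂ φs / b := by
        apply div_le_div_of_nonneg_left (le_trans ha.le (hL₂bdd φs)) hb hbs
    _ ≤ ((B - b) / lam + a) / b := by
        gcongr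
    _ = (1 / lam) * (B / b - 1) + a / b := by field_simp
end
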